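/- arXiv:1608.04685 — 6 statements merged into one kernel-verified Lean document; each statement's English description precedes it below -/
import Mathlib

section
/- For every real number k, 1/(1+|k|) ≤ tanh(k)/k ≤ 2/(1+|k|), where the quotient tanh(k)/k is understood to equal 1 at k = 0. -/
noncomputable def cww2 (k : ℝ) : ℝ := if k = 0 then 1 else Real.tanh k / k

/-!
Since `cww2` is even, it suffices to take `k > 0`. The lower bound is `e^{2k} ≥ 1 + 2k` rewritten
as `tanh k ≥ k / (1 + k)`. The upper bound follows from `tanh k ≤ min k 1`, where `tanh k ≤ k`
holds because `t cosh t - sinh t` is increasing on `[0, ∞)`.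
-/

namespace Real

theorem sinh_le_mul_cosh {x : ℝ} (hx : 0 ≤ x) : sinh x ≤ x * cosh x := by
  have hmono : MonotoneOn (fun t => t * cosh t - sinh t) (Set.Ici 0) := by
    refine monotoneOn_of_hasDerivWithinAt_nonneg (f' := fun t => t * sinh t) (convex_Ici 0)
      (by fun_prop) (fun t _ => ?_) (fun t ht => ?_)
    · have h := ((hasDerivAt_id' t).mul (hasDerivAt_cosh t)).sub (hasDerivAt_sinh t)
      rw [one_mul, add_sub_cancel_left] at h
      exact h.hasDerivWithinAt
    · rw [interior_Ici] at ht
      exact mul_nonneg ht.le (sinh_nonneg_iff.mpr ht.le)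
  simpa using hmono Set.self_mem_Ici hx hx

theorem tanh_le_self {x : ℝ} (hx : 0 ≤ x) : tanh x ≤ x := by
  rw [tanh_eq_sinh_div_cosh, div_le_iff₀ (cosh_pos x)]
  exact sinh_le_mul_cosh hx

theorem div_one_add_le_tanh {x : ℝ} (hx : 0 ≤ x) : x / (1 + x) ≤ tanh x := by
  rw [tanh_eq_sinh_div_cosh, div_le_div_iff₀ (by positivity) (cosh_pos x)]
  -- `(1 + x) sinh x - x cosh x = (eˣ - e⁻ˣ (1 + 2x)) / 2`
  have key : exp (-x) * (2 * x + 1) ≤ exp x := by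
    calc exp (-x) * (2 * x + 1) ≤ exp (-x) * exp (2 * x) :=
          mul_le_mul_of_nonneg_left (add_one_le_exp _) (exp_pos _).le
      _ = exp x := by rw [← exp_add]; ring_nf
  rw [sinh_eq, cosh_eq]
  linarith

theorem tanh_le_two_mul_div_one_add {x : ℝ} (hx : 0 ≤ x) : tanh x ≤ 2 * x / (1 + x) := by
  rw [le_div_iff₀ (by positivity)]
  rcases le_total x 1 with h | h
  · nlinarith [tanh_le_self hx]
  · nlinarith [tanh_lt_one x, tanh_le_self hx]

end Real

theorem cww2_neg (k : ℝ) : cww2 (-k) = cww2 k := by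
  unfold cww2
  split_ifs <;> simp_all [Real.tanh_neg, neg_div_neg_eq]

theorem cww2_abs (k : ℝ) : cww2 |k| = cww2 k := by
  rcases abs_choice k with h | h <;> rw [h]
  exact cww2_neg k

theorem cww2_bounds_of_nonneg {k : ℝ} (hk : 0 ≤ k) :
    1 / (1 + k) ≤ cww2 k ∧ cww2 k ≤ 2 / (1 + k) := by
  rcases hk.eq_or_lt with rfl | hpos
  · norm_num [cww2]
  rw [cww2, if_neg hpos.ne', le_div_iff₀ hpos, div_le_iff₀ hpos, div_mul_eq_mul_div,
    div_mul_eq_mul_div, one_mul]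
  exact ⟨Real.div_one_add_le_tanh hk, Real.tanh_le_two_mul_div_one_add hk⟩

/-- For every real `k`, `1/(1+|k|) ≤ tanh(k)/k ≤ 2/(1+|k|)`
(with `tanh(k)/k` understood to equal `1` at `k = 0`). -/
theorem cww2_bounds (k : ℝ) :
    1 / (1 + |k|) ≤ cww2 k ∧ cww2 k ≤ 2 / (1 + |k|) := by
  rw [← cww2_abs k]
  exact cww2_bounds_of_nonneg (abs_nonneg k)
end

section
/- For every κ > 0, the derivative of the map k ↦ k·c_ww(k) at κ lies strictly between 0 and 1; in particular the modulational instability index i₂(κ) = ((κ c_ww(κ))')² − 1 is strictly negative for all κ > 0. -/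
/-!
For `k > 0` we have `k c_ww(k) = √(k tanh k)`, whose derivative at `κ` is
`(tanh κ + κ / cosh² κ) / (2 √(κ tanh κ))`. Both terms of the numerator are positive, and
`κ / cosh² κ < tanh κ < κ` (the first is `2κ < sinh 2κ`) bounds the numerator by
`2 tanh κ = 2 √(tanh κ · tanh κ) < 2 √(κ tanh κ)`.
-/

/-- The water-wave phase speed `c_ww(k) = √(tanh k / k)` (normalized depth and gravity),
extended by `c_ww(0) = 1`. -/
noncomputable def cww (k : ℝ) : ℝ := if k = 0 then 1 else Real.sqrt (Real.tanh k / k)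

open Filter Topology

namespace Real

theorem tanh_pos {x : ℝ} (hx : 0 < x) : 0 < tanh x := by
  rw [tanh_eq_sinh_div_cosh]
  exact div_pos (sinh_pos_iff.2 hx) (cosh_pos x)

theorem hasDerivAt_tanh (x : ℝ) : HasDerivAt tanh (1 / cosh x ^ 2) x := by
  have h := (hasDerivAt_sinh x).div (hasDerivAt_cosh x) (cosh_pos x).ne'
  rw [← sq, ← sq, cosh_sq_sub_sinh_sq] at h
  rwa [show tanh = sinh / cosh from funext tanh_eq_sinh_div_cosh]

theorem continuous_tanh : Continuous tanh :=
  continuous_iff_continuousAt.2 fun x => (hasDerivAt_tanh x).continuousAt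

theorem tanh_lt_self {x : ℝ} (hx : 0 < x) : tanh x < x := by
  have hmono : StrictMonoOn (fun y => y - tanh y) (Set.Ici 0) := by
    refine strictMonoOn_of_deriv_pos (convex_Ici 0)
      (continuous_id.sub continuous_tanh).continuousOn fun y hy => ?_
    rw [interior_Ici] at hy
    have hderiv : HasDerivAt (fun y => y - tanh y) (1 - 1 / cosh y ^ 2) y :=
      (hasDerivAt_id' y).sub (hasDerivAt_tanh y)
    rw [hderiv.deriv, sub_pos, div_lt_one (by positivity)]
    exact one_lt_pow₀ (one_lt_cosh.2 (ne_of_gt hy)) two_ne_zero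
  simpa using hmono Set.self_mem_Ici hx.le hx

theorem div_cosh_sq_lt_tanh {x : ℝ} (hx : 0 < x) : x / cosh x ^ 2 < tanh x := by
  have hsinh : 2 * x < 2 * sinh x * cosh x := by
    rw [← sinh_two_mul]
    exact self_lt_sinh_iff.2 (by positivity)
  rw [tanh_eq_sinh_div_cosh, div_lt_div_iff₀ (by positivity) (cosh_pos x)]
  nlinarith [cosh_pos x]

end Real

open Real

theorem add_lt_two_mul_sqrt_mul {a b c : ℝ} (hba : b < a) (ha : 0 ≤ a) (hac : a ≤ c) :
    a + b < 2 * √(c * a) :=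
  calc a + b < 2 * a := by linarith
    _ = 2 * √(a * a) := by rw [sqrt_mul_self ha]
    _ ≤ 2 * √(c * a) := by gcongr

theorem mul_cww_of_pos {k : ℝ} (hk : 0 < k) : k * cww k = √(k * tanh k) := by
  rw [cww, if_neg hk.ne', show k * tanh k = k ^ 2 * (tanh k / k) by field_simp,
    sqrt_mul (sq_nonneg k), sqrt_sq hk.le]

theorem hasDerivAt_mul_cww {κ : ℝ} (hκ : 0 < κ) :
    HasDerivAt (fun k => k * cww k)
      ((tanh κ + κ / cosh κ ^ 2) / (2 * √(κ * tanh κ))) κ := by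
  have hsqrt : HasDerivAt (fun k => √(k * tanh k))
      ((1 * tanh κ + κ * (1 / cosh κ ^ 2)) / (2 * √(κ * tanh κ))) κ :=
    ((hasDerivAt_id κ).mul (hasDerivAt_tanh κ)).sqrt (mul_pos hκ (tanh_pos hκ)).ne'
  rw [one_mul, mul_one_div] at hsqrt
  exact hsqrt.congr_of_eventuallyEq <|
    (eventually_gt_nhds hκ).mono fun k hk => mul_cww_of_pos hk

/-- For every `κ > 0`, the group velocity `(κ c_ww(κ))'` lies strictly between `0` and `1`;
in particular the modulational instability index `i₂(κ) = ((κ c_ww(κ))')² − 1` is strictly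
negative for all `κ > 0`. -/
theorem group_velocity_between_zero_and_one (κ : ℝ) (hκ : 0 < κ) :
    0 < deriv (fun k : ℝ => k * cww k) κ ∧
    deriv (fun k : ℝ => k * cww k) κ < 1 ∧
    (deriv (fun k : ℝ => k * cww k) κ) ^ 2 - 1 < 0 := by
  rw [(hasDerivAt_mul_cww hκ).deriv]
  have hden : 0 < 2 * √(κ * tanh κ) := by
    have := tanh_pos hκ
    positivity
  have hpos : 0 < (tanh κ + κ / cosh κ ^ 2) / (2 * √(κ * tanh κ)) :=
    div_pos (add_pos (tanh_pos hκ) (by positivity)) hden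
  have hlt : (tanh κ + κ / cosh κ ^ 2) / (2 * √(κ * tanh κ)) < 1 :=
    (div_lt_one hden).2 <| add_lt_two_mul_sqrt_mul (div_cosh_sq_lt_tanh hκ)
      (tanh_pos hκ).le (tanh_lt_self hκ).le
  exact ⟨hpos, hlt, by nlinarith⟩
end

section
/- For every κ > 0, the function s ↦ s·(c_ww(κ) + c_ww(κ s)) is strictly increasing on all of ℝ, where c_ww is extended evenly (so c_ww(κ s) = c_ww(κ |s|)). -/
/-!
For `s ≥ 0` one has `s · c_ww(κ s) = √(s · tanh(κ s) / κ)`, and `s ↦ s · tanh(κ s)` is a product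
of nonnegative nondecreasing functions, so `s ↦ s · c_ww(κ s)` is nondecreasing on `[0, ∞)`; being
odd, it is nondecreasing on all of `ℝ`. Adding the strictly increasing linear term `s · c_ww(κ)`
gives a strictly increasing function.
-/

open Real

theorem Real.tanh_strictMono : StrictMono tanh := by
  intro x y hxy
  rw [tanh_eq_sinh_div_cosh, tanh_eq_sinh_div_cosh, div_lt_div_iff₀ (cosh_pos x) (cosh_pos y)]
  have hsinh : 0 < sinh (y - x) := sinh_pos_iff.2 (sub_pos.2 hxy)
  rw [sinh_sub] at hsinh
  linarith

theorem Real.tanh_nonneg {x : ℝ} (hx : 0 ≤ x) : 0 ≤ tanh x :=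
  tanh_zero ▸ tanh_strictMono.monotone hx

theorem cww_neg (k : ℝ) : cww (-k) = cww k := by
  simp only [cww, neg_eq_zero, tanh_neg, neg_div_neg_eq]

theorem cww_pos (k : ℝ) : 0 < cww k := by
  unfold cww
  split_ifs with hk
  · exact one_pos
  refine sqrt_pos.2 (div_pos_iff.2 ?_)
  rcases Ne.lt_or_gt hk with hk | hk
  · exact Or.inr ⟨tanh_zero ▸ tanh_strictMono hk, hk⟩
  · exact Or.inl ⟨tanh_zero ▸ tanh_strictMono hk, hk⟩

theorem mul_cww_mul_eq_sqrt {κ s : ℝ} (hκ : 0 < κ) (hs : 0 ≤ s) :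
    s * cww (κ * s) = √(s * tanh (κ * s) / κ) := by
  rcases hs.eq_or_lt with rfl | hs
  · simp
  rw [cww, if_neg (by positivity), ← sqrt_sq hs.le, ← sqrt_mul (sq_nonneg s)]
  congr 1
  field_simp
  rw [sq_sqrt (sq_nonneg s)]

theorem monotone_mul_cww_mul {κ : ℝ} (hκ : 0 < κ) : Monotone fun s => s * cww (κ * s) := by
  refine monotone_of_odd_of_monotoneOn_nonneg (fun s => by rw [mul_neg, cww_neg, neg_mul]) ?_
  intro a (ha : 0 ≤ a) b (hb : 0 ≤ b) hab
  simp only [mul_cww_mul_eq_sqrt hκ ha, mul_cww_mul_eq_sqrt hκ hb]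
  gcongr
  · exact tanh_nonneg (by positivity)
  · exact tanh_strictMono.monotone (by gcongr)

/-- For every `κ > 0`, the '+' branch frequency `s ↦ s(c_ww(κ) + c_ww(κ s))` of the linear
dispersion relation is strictly increasing on all of `ℝ`. -/
theorem omega_plus_strictMono (κ : ℝ) (hκ : 0 < κ) :
    StrictMono (fun s : ℝ => s * (cww κ + cww (κ * s))) := by
  have hlin : StrictMono fun s : ℝ => s * cww κ := strictMono_mul_right_of_pos (cww_pos κ)
  simpa only [mul_add] using hlin.add_monotone (monotone_mul_cww_mul hκ)
end

section
/- For every κ > 0, every integer n₂ ≥ 0, and every ξ ∈ (0, 1/2], one has (n₂+1+ξ)·c_ww(κ(n₂+1+ξ)) + (n₂+ξ)·c_ww(κ(n₂+ξ)) > c_ww(κ). -/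
lemma tanh_pos_of_pos {x : ℝ} (hx : 0 < x) : 0 < Real.tanh x := by
  rw [Real.tanh_eq_sinh_div_cosh]
  exact div_pos (by positivity) (Real.cosh_pos x)

lemma tanh_le_tanh {x y : ℝ} (hxy : x ≤ y) : Real.tanh x ≤ Real.tanh y := by
  rw [Real.tanh_eq_sinh_div_cosh, Real.tanh_eq_sinh_div_cosh,
    div_le_div_iff₀ (Real.cosh_pos x) (Real.cosh_pos y)]
  have h : 0 ≤ Real.sinh (y - x) := by
    have : Real.sinh 0 ≤ Real.sinh (y - x) := Real.sinh_le_sinh.mpr (by linarith)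
    simpa using this
  rw [Real.sinh_sub] at h
  nlinarith

lemma cww_pos_of_pos {k : ℝ} (hk : 0 < k) : 0 < cww k := by
  rw [cww, if_neg hk.ne']
  exact Real.sqrt_pos.mpr (div_pos (tanh_pos_of_pos hk) hk)

/-- For every `κ > 0`, every integer `n₂ ≥ 0`, and every `ξ ∈ (0, 1/2]`,
`(n₂+1+ξ)·c_ww(κ(n₂+1+ξ)) + (n₂+ξ)·c_ww(κ(n₂+ξ)) > c_ww(κ)`. -/
theorem no_adjacent_collision_ineq (κ : ℝ) (hκ : 0 < κ) (n₂ : ℤ) (hn : 0 ≤ n₂)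
    (ξ : ℝ) (hξ : ξ ∈ Set.Ioc (0 : ℝ) (1 / 2)) :
    ((n₂ : ℝ) + 1 + ξ) * cww (κ * ((n₂ : ℝ) + 1 + ξ))
      + ((n₂ : ℝ) + ξ) * cww (κ * ((n₂ : ℝ) + ξ)) > cww κ := by
  obtain ⟨hξ0, hξ2⟩ := hξ
  have hn' : (0:ℝ) ≤ (n₂ : ℝ) := by exact_mod_cast hn
  set a : ℝ := (n₂ : ℝ) + 1 + ξ with ha
  set b : ℝ := (n₂ : ℝ) + ξ with hb
  have hb0 : 0 < b := by positivity
  have ha1 : 1 < a := by simp only [ha]; linarith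
  have ha0 : 0 < a := by linarith
  have hκa : 0 < κ * a := by positivity
  have hκb : 0 < κ * b := by positivity
  -- second term positive
  have h2 : 0 < b * cww (κ * b) := mul_pos hb0 (cww_pos_of_pos hκb)
  -- first term exceeds cww κ
  have h1 : cww κ < a * cww (κ * a) := by
    rw [cww, cww, if_neg hκ.ne', if_neg hκa.ne']
    have key : Real.tanh κ / κ < a ^ 2 * (Real.tanh (κ * a) / (κ * a)) := by
      have ht : Real.tanh κ ≤ Real.tanh (κ * a) :=
        tanh_le_tanh (by nlinarith)
      have htp : 0 < Real.tanh κ := tanh_pos_of_pos hκ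
      rw [div_lt_iff₀ hκ]
      have : a ^ 2 * (Real.tanh (κ * a) / (κ * a)) = a * Real.tanh (κ * a) / κ := by
        field_simp
      rw [this, div_mul_eq_mul_div, lt_div_iff₀ hκ]
      have h3 : 0 < Real.tanh (κ * a) * κ := mul_pos (lt_of_lt_of_le htp ht) hκ
      nlinarith [mul_le_mul_of_nonneg_right ht hκ.le]
    calc Real.sqrt (Real.tanh κ / κ)
        < Real.sqrt (a ^ 2 * (Real.tanh (κ * a) / (κ * a))) :=
          Real.sqrt_lt_sqrt (le_of_lt (div_pos (tanh_pos_of_pos hκ) hκ)) key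
      _ = a * Real.sqrt (Real.tanh (κ * a) / (κ * a)) := by
          rw [Real.sqrt_mul (sq_nonneg a), Real.sqrt_sq ha0.le]
  linarith
end

section
/- For every b < 0 and every c ∈ ℝ, there exist k > 0 and λ ∈ ℂ with Re λ > 0 such that (λ − i c k)² = −k²·(c_ww²(k) + 2b); that is, the linearization of the Boussinesq–Whitham equation ∂t²η = c_ww²(|∂x|)∂x²η + ∂x²(η²) about the constant state η = b, in a frame moving with any speed c, admits a Fourier-mode solution e^{λt}e^{ikx} with exponentially growing amplitude. In particular, every negative constant solution is spectrally unstable, however small it is. -/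
/-! Since `tanh k < 1`, `c_ww²(k) < 1/k` decays, so at the wavenumber `k = -1/b` the
coefficient `c_ww²(k) + 2b` is already below `b < 0`; the right-hand side `-k²(c_ww²(k) + 2b)`
is then a positive real, and its positive square root, shifted by the Doppler term `ick`,
is a growing eigenvalue. -/

theorem cww2_lt_inv {k : ℝ} (hk : 0 < k) : cww2 k < k⁻¹ := by
  rw [cww2, if_neg hk.ne', div_eq_mul_inv]
  exact mul_lt_of_lt_one_left (inv_pos.mpr hk) (Real.tanh_lt_one k)

theorem exists_re_pos_sub_sq_eq_neg_sq_mul {k d : ℝ} (c : ℝ) (hk : k ≠ 0) (hd : d < 0) :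
    ∃ lam : ℂ, 0 < lam.re ∧
      (lam - Complex.I * (c : ℂ) * (k : ℂ)) ^ 2 = -((k : ℂ)) ^ 2 * (d : ℂ) := by
  have hroot : (|k| * √(-d)) ^ 2 = k ^ 2 * -d := by
    rw [mul_pow, sq_abs, Real.sq_sqrt (neg_nonneg.mpr hd.le)]
  refine ⟨((|k| * √(-d) : ℝ) : ℂ) + Complex.I * c * k, ?_, ?_⟩
  · simpa using mul_pos (abs_pos.mpr hk) (Real.sqrt_pos.mpr (neg_pos.mpr hd))
  · rw [add_sub_cancel_right, ← Complex.ofReal_pow, hroot]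
    push_cast
    ring

/-- For every `b < 0` and every `c ∈ ℝ`, there exist `k > 0` and `λ ∈ ℂ` with `Re λ > 0`
such that `(λ − i c k)² = −k²(c_ww²(k) + 2b)`: the linearization of the Boussinesq–Whitham
equation `∂t²η = c_ww²(|∂x|)∂x²η + ∂x²(η²)` about the constant state `η = b`, in a frame
moving with speed `c`, admits an exponentially growing Fourier-mode solution. Every negative
constant solution is spectrally unstable, however small it is. -/
theorem BW1_negative_constant_unstable (b : ℝ) (hb : b < 0) (c : ℝ) :
    ∃ k : ℝ, 0 < k ∧ ∃ lam : ℂ, 0 < lam.re ∧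
      (lam - Complex.I * (c : ℂ) * (k : ℂ)) ^ 2
        = -((k : ℂ)) ^ 2 * ((cww2 k : ℝ) + 2 * b : ℝ) := by
  have hk : 0 < -b⁻¹ := neg_pos.mpr (inv_lt_zero.mpr hb)
  have hd : cww2 (-b⁻¹) + 2 * b < 0 := by
    have := cww2_lt_inv hk
    rw [inv_neg, inv_inv] at this
    linarith
  exact ⟨-b⁻¹, hk, exists_re_pos_sub_sq_eq_neg_sq_mul c hk.ne' hd⟩
end

section
/- For every real k, |sgn(k) − tanh(k)| ≤ e^{−|k|}, where sgn denotes the sign function (sgn(0) = 0). -/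
open Real

lemma one_sub_tanh_eq_exp_neg_div_cosh (x : ℝ) : 1 - tanh x = exp (-x) / cosh x := by
  rw [tanh_eq_sinh_div_cosh, ← cosh_sub_sinh]
  field_simp

lemma abs_one_sub_tanh_le_exp_neg (x : ℝ) : |1 - tanh x| ≤ exp (-x) := by
  rw [one_sub_tanh_eq_exp_neg_div_cosh, abs_of_nonneg (by positivity)]
  exact div_le_self (exp_pos _).le (one_le_cosh x)

/-- For every real `k`, `|sgn(k) − tanh(k)| ≤ e^{−|k|}`, where `sgn` is the sign function
(`sgn(0) = 0`). -/
theorem sign_sub_tanh_bound (k : ℝ) :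
    |Real.sign k - Real.tanh k| ≤ Real.exp (-|k|) := by
  rcases lt_trichotomy k 0 with hk | rfl | hk
  · rw [sign_of_neg hk, abs_of_neg hk]
    calc |-1 - tanh k| = |1 - tanh (-k)| := by rw [tanh_neg, ← abs_neg]; ring_nf
      _ ≤ exp (-(-k)) := abs_one_sub_tanh_le_exp_neg (-k)
  · simp
  · rw [sign_of_pos hk, abs_of_pos hk]
    exact abs_one_sub_tanh_le_exp_neg k
end
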